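/- Reducing a critical clique of size greater than k+1 to size exactly k+1 preserves the answer to CEVS: if K is a critical clique of G with |K| > k+1 and G' is obtained by deleting |K| − (k+1) vertices of K, then (G,k) is a yes-instance of Cluster Editing with Vertex Splitting iff (G',k) is. -/

import Mathlib

open scoped Classical

/-- The cluster graph determined by a covering `C` of the vertex set: two distinct
vertices are adjacent iff they lie in a common set of `C`. -/
def clusterGraphOf {V : Type*} (C : Finset (Finset V)) : SimpleGraph V :=
  SimpleGraph.fromRel (fun u v => ∃ S ∈ C, u ∈ S ∧ v ∈ S)

/-- The number of vertex splittings needed to realize the covering `C`: a vertex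
occurring in `m` clusters must be split `m - 1` times. -/
noncomputable def splitCost {V : Type*} [Fintype V] (C : Finset (Finset V)) : ℕ :=
  ∑ v : V, ((C.filter (fun S => v ∈ S)).card - 1)

/-- The number of edges on which two graphs differ. -/
noncomputable def editDiff {V : Type*} [Fintype V] (G H : SimpleGraph V) : ℕ :=
  (Finset.univ.filter (fun e : Sym2 V =>
    (e ∈ G.edgeSet ∧ e ∉ H.edgeSet) ∨ (e ∉ G.edgeSet ∧ e ∈ H.edgeSet))).card

/-- The minimum number of edit operations (edge additions, edge deletions and
inclusive vertex splits) of a solution of CEVS represented by the covering `C`. -/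
noncomputable def cevsCost {V : Type*} [Fintype V] (G : SimpleGraph V)
    (C : Finset (Finset V)) : ℕ :=
  splitCost C + editDiff G (clusterGraphOf C)

/-- `C` is a covering of the vertex set. -/
def IsCovering {V : Type*} (C : Finset (Finset V)) : Prop :=
  ∀ v : V, ∃ S ∈ C, v ∈ S

/-- `(G, k)` is a yes-instance of Cluster Editing with Vertex Splitting: some
covering of the vertex set (representing the clusters of the final cluster graph,
each set being the original vertices corresponding to one final clique) has edit
cost at most `k`. -/
noncomputable def CEVS {V : Type*} [Fintype V] (G : SimpleGraph V) (k : ℕ) : Prop :=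
  ∃ C : Finset (Finset V), IsCovering C ∧ cevsCost G C ≤ k

/-- `C` is an optimal solution of CEVS on `G`: a covering of minimum edit cost. -/
noncomputable def IsOptimalSolution {V : Type*} [Fintype V] (G : SimpleGraph V)
    (C : Finset (Finset V)) : Prop :=
  IsCovering C ∧ ∀ C' : Finset (Finset V), IsCovering C' → cevsCost G C ≤ cevsCost G C'

/-- The closed neighborhood `N[v]` of a vertex. -/
def closedNbhd {V : Type*} (G : SimpleGraph V) (v : V) : Set V :=
  insert v (G.neighborSet v)

/-- A critical clique: a maximal set of vertices inducing a complete subgraph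
all of whose members share the same closed neighborhood. -/
def IsCriticalClique {V : Type*} (G : SimpleGraph V) (C : Set V) : Prop :=
  G.IsClique C ∧ (∃ U : Set V, ∀ v ∈ C, closedNbhd G v = U) ∧
    ∀ D : Set V, C ⊆ D → G.IsClique D →
      (∃ U : Set V, ∀ v ∈ D, closedNbhd G v = U) → D = C

/-!
All vertices of a critical clique `K` have the same closed neighbourhood. Deleting vertices
preserves yes-instances, since a solution restricts to any induced subgraph. Conversely, a
solution of cost at most `k` for `G'` makes fewer operations than the `k + 1` surviving vertices
of `K`, so one of them, `u`, lies in a single cluster and has no edited pair leaving `K`. Putting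
every vertex of `K` into exactly the clusters of `u` then gives a solution for `G` of no larger
cost, because each vertex of `K` sees the rest of the graph exactly as `u` does.
-/

open Finset

section Twins

variable {V : Type*} {G : SimpleGraph V} {x y w : V}

lemma adj_iff_adj_of_closedNbhd_eq (h : closedNbhd G x = closedNbhd G y) (hwx : w ≠ x)
    (hwy : w ≠ y) : G.Adj x w ↔ G.Adj y w := by
  have hw := Set.ext_iff.1 h w
  simpa [closedNbhd, hwx, hwy] using hw

lemma adj_of_closedNbhd_eq (h : closedNbhd G x = closedNbhd G y) (hxy : x ≠ y) : G.Adj x y := by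
  have hy := Set.ext_iff.1 h y
  simpa [closedNbhd, Ne.symm hxy, G.adj_comm] using hy

end Twins

lemma clusterGraphOf_adj {V : Type*} {C : Finset (Finset V)} {x y : V} :
    (clusterGraphOf C).Adj x y ↔ x ≠ y ∧ ∃ S ∈ C, x ∈ S ∧ y ∈ S := by
  rw [clusterGraphOf, SimpleGraph.fromRel_adj]
  refine and_congr_right fun _ => ⟨?_, Or.inl⟩
  rintro (h | ⟨S, hS, hy, hx⟩)
  exacts [h, ⟨S, hS, hx, hy⟩]

section EditSet

variable {V : Type*} [Fintype V]

noncomputable def editSet (G H : SimpleGraph V) : Finset (Sym2 V) :=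
  univ.filter fun e => (e ∈ G.edgeSet ∧ e ∉ H.edgeSet) ∨ (e ∉ G.edgeSet ∧ e ∈ H.edgeSet)

lemma editDiff_eq_card_editSet (G H : SimpleGraph V) : editDiff G H = #(editSet G H) := rfl

lemma mk_mem_editSet {G H : SimpleGraph V} {x y : V} :
    s(x, y) ∈ editSet G H ↔ ¬(G.Adj x y ↔ H.Adj x y) := by
  simp only [editSet, mem_filter, mem_univ, true_and, SimpleGraph.mem_edgeSet]
  tauto

end EditSet

lemma sum_card_filter_mk_mem_le {α : Type*} (E : Finset (Sym2 α)) {K L : Finset α}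
    (hKL : Disjoint K L) : ∑ v ∈ K, #{w ∈ L | s(v, w) ∈ E} ≤ #E := by
  rw [← card_sigma]
  refine card_le_card_of_injOn (fun p => s(p.1, p.2)) (fun p hp => ?_) ?_
  · simp only [mem_coe, mem_sigma, mem_filter] at hp
    exact hp.2.2
  · rintro ⟨v, w⟩ hp ⟨v', w'⟩ hp' heq
    simp only [coe_sigma, Set.mem_sigma_iff, mem_coe, mem_filter] at hp hp'
    rcases Sym2.eq_iff.1 heq with ⟨rfl, rfl⟩ | ⟨rfl, -⟩
    · rfl
    · exact absurd hp'.2.1 (disjoint_left.1 hKL hp.1)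

lemma exists_untouched_of_cevsCost_lt {W : Type*} [Fintype W] {H : SimpleGraph W}
    {C : Finset (Finset W)} (hC : IsCovering C) {K : Finset W} (hK : cevsCost H C < #K) :
    ∃ u ∈ K, #{S ∈ C | u ∈ S} = 1 ∧ ∀ w ∉ K, (H.Adj u w ↔ (clusterGraphOf C).Adj u w) := by
  rw [cevsCost, editDiff_eq_card_editSet] at hK
  set E := editSet H (clusterGraphOf C)
  -- Otherwise each vertex of `K` is charged a split of its own or an edited pair leaving `K`.
  by_contra! hnone
  have hcharge : ∀ v ∈ K, 1 ≤ (#{S ∈ C | v ∈ S} - 1) + #{w ∈ Kᶜ | s(v, w) ∈ E} := by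
    intro v hv
    obtain ⟨S, hS, hvS⟩ := hC v
    have hpos : 0 < #{S ∈ C | v ∈ S} := card_pos.2 ⟨S, mem_filter.2 ⟨hS, hvS⟩⟩
    by_cases hsplit : #{S ∈ C | v ∈ S} = 1
    · obtain ⟨w, hw, hedit⟩ := hnone v hv hsplit
      have : 0 < #{w ∈ Kᶜ | s(v, w) ∈ E} :=
        card_pos.2 ⟨w, mem_filter.2 ⟨mem_compl.2 hw, mk_mem_editSet.2 (by tauto)⟩⟩
      omega
    · omega
  have hcount : #K ≤ ∑ v ∈ K, (#{S ∈ C | v ∈ S} - 1) + ∑ v ∈ K, #{w ∈ Kᶜ | s(v, w) ∈ E} := by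
    rw [← sum_add_distrib, card_eq_sum_ones]
    exact sum_le_sum hcharge
  have hsplit : ∑ v ∈ K, (#{S ∈ C | v ∈ S} - 1) ≤ splitCost C :=
    sum_le_sum_of_subset (subset_univ K)
  have hedit := sum_card_filter_mk_mem_le E (disjoint_compl_right (a := K))
  omega

section CoverComap

variable {V W : Type*} [Fintype V]

noncomputable def coverComap (g : V → W) (C : Finset (Finset W)) : Finset (Finset V) :=
  C.image fun S => univ.filter fun v => g v ∈ S

variable (g : V → W) {C : Finset (Finset W)}

lemma IsCovering.coverComap (hC : IsCovering C) : IsCovering (coverComap g C) := fun v => by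
  obtain ⟨S, hS, hv⟩ := hC (g v)
  exact ⟨_, mem_image_of_mem _ hS, by simpa using hv⟩

lemma clusterGraphOf_coverComap_adj {x y : V} :
    (clusterGraphOf (coverComap g C)).Adj x y ↔ x ≠ y ∧ ∃ S ∈ C, g x ∈ S ∧ g y ∈ S := by
  simp [clusterGraphOf_adj, coverComap]

lemma clusterGraphOf_coverComap_adj_iff {x y : V} (hxy : g x = g y → x = y) :
    (clusterGraphOf (coverComap g C)).Adj x y ↔ (clusterGraphOf C).Adj (g x) (g y) := by
  rw [clusterGraphOf_coverComap_adj, clusterGraphOf_adj]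
  exact and_congr_left' ⟨mt hxy, fun h hxy => h (congrArg g hxy)⟩

lemma card_filter_coverComap_le (v : V) :
    #{T ∈ coverComap g C | v ∈ T} ≤ #{S ∈ C | g v ∈ S} := by
  rw [coverComap, filter_image]
  refine card_image_le.trans_eq ?_
  simp

variable [Fintype W]

lemma splitCost_coverComap_le (A : Set V) (hinj : Set.InjOn g Aᶜ)
    (hA : ∀ v ∈ A, #{S ∈ C | g v ∈ S} ≤ 1) : splitCost (coverComap g C) ≤ splitCost C := by
  set F : W → ℕ := fun w => #{S ∈ C | w ∈ S} - 1
  calc splitCost (coverComap g C) ≤ ∑ v, F (g v) :=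
        sum_le_sum fun v _ => Nat.sub_le_sub_right (card_filter_coverComap_le g v) 1
    _ ≤ ∑ v ∈ univ.filter (· ∉ A), F (g v) := sum_le_sum_of_ne_zero fun v _ hv =>
        mem_filter.2 ⟨mem_univ _, fun hvA => hv (Nat.sub_eq_zero_of_le (hA v hvA))⟩
    _ = ∑ w ∈ (univ.filter (· ∉ A)).image g, F w :=
        (sum_image fun x hx y hy => hinj (by simpa using hx) (by simpa using hy)).symm
    _ ≤ ∑ w, F w := sum_le_sum_of_subset (subset_univ _)

lemma editDiff_le_of_injOn {G₁ H₁ : SimpleGraph V} {G₂ H₂ : SimpleGraph W} (A : Set V)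
    (hinj : Set.InjOn g Aᶜ) (hA : ∀ x ∈ A, ∀ y, G₁.Adj x y ↔ H₁.Adj x y)
    (hG : ∀ x ∉ A, ∀ y ∉ A, G₁.Adj x y ↔ G₂.Adj (g x) (g y))
    (hH : ∀ x ∉ A, ∀ y ∉ A, H₁.Adj x y ↔ H₂.Adj (g x) (g y)) :
    editDiff G₁ H₁ ≤ editDiff G₂ H₂ := by
  have hout : ∀ x y, ¬(G₁.Adj x y ↔ H₁.Adj x y) → x ∉ A ∧ y ∉ A := fun x y h =>
    ⟨fun hx => h (hA x hx y), fun hy => h (by rw [G₁.adj_comm, H₁.adj_comm]; exact hA y hy x)⟩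
  rw [editDiff_eq_card_editSet, editDiff_eq_card_editSet]
  refine card_le_card_of_injOn (Sym2.map g) (fun e he => ?_) (fun e he e' he' heq => ?_)
  · induction e using Sym2.ind with | _ x y => ?_
    rw [mem_coe, mk_mem_editSet] at he
    rw [mem_coe, Sym2.map_mk, mk_mem_editSet]
    obtain ⟨hx, hy⟩ := hout x y he
    rwa [← hG x hx y hy, ← hH x hx y hy]
  · induction e using Sym2.ind with | _ x y => ?_
    induction e' using Sym2.ind with | _ x' y' => ?_
    rw [mem_coe, mk_mem_editSet] at he he'
    obtain ⟨hx, hy⟩ := hout x y he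
    obtain ⟨hx', hy'⟩ := hout x' y' he'
    simp only [Sym2.map_mk, Sym2.eq_iff] at heq ⊢
    rcases heq with ⟨h₁, h₂⟩ | ⟨h₁, h₂⟩
    · exact Or.inl ⟨hinj hx hx' h₁, hinj hy hy' h₂⟩
    · exact Or.inr ⟨hinj hx hy' h₁, hinj hy hx' h₂⟩

theorem cevsCost_coverComap_le (G : SimpleGraph V) (H : SimpleGraph W) (A : Set V)
    (hinj : Set.InjOn g Aᶜ) (hsplit : ∀ v ∈ A, #{S ∈ C | g v ∈ S} ≤ 1)
    (hedit : ∀ x ∈ A, ∀ y, G.Adj x y ↔ (clusterGraphOf (coverComap g C)).Adj x y)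
    (hadj : ∀ x ∉ A, ∀ y ∉ A, G.Adj x y ↔ H.Adj (g x) (g y)) :
    cevsCost G (coverComap g C) ≤ cevsCost H C :=
  add_le_add (splitCost_coverComap_le g A hinj hsplit) <|
    editDiff_le_of_injOn g A hinj hedit hadj fun _ hx _ hy =>
      clusterGraphOf_coverComap_adj_iff g fun h => hinj hx hy h

end CoverComap

theorem CEVS.comap {V W : Type*} [Fintype V] [Fintype W] {H : SimpleGraph W} {k : ℕ}
    (f : V ↪ W) (h : CEVS H k) : CEVS (H.comap f) k := by
  obtain ⟨C, hC, hcost⟩ := h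
  refine ⟨coverComap f C, hC.coverComap f, le_trans ?_ hcost⟩
  exact cevsCost_coverComap_le f _ H ∅ f.injective.injOn (by simp) (by simp) fun _ _ _ _ => .rfl

theorem CEVS.of_induce_of_closedNbhd_eq {V : Type*} [Fintype V] {G : SimpleGraph V} {k : ℕ}
    {K : Finset V} (htwin : ∀ x ∈ K, ∀ y ∈ K, closedNbhd G x = closedNbhd G y) {s : Set V}
    [Fintype s] (hs : ∀ v ∉ K, v ∈ s) (hcard : k + 1 ≤ #{v ∈ K | v ∈ s})
    (h : CEVS (G.induce s) k) : CEVS G k := by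
  obtain ⟨C, hC, hcost⟩ := h
  obtain ⟨u, huK, hu1, hu⟩ := exists_untouched_of_cevsCost_lt (H := G.induce s) hC
    (K := K.subtype (· ∈ s)) (by rw [card_subtype]; omega)
  rw [mem_subtype] at huK
  -- Every vertex of `K` is glued to `u`; the other vertices keep their clusters.
  let g : V → s := fun v => if hv : v ∉ K then ⟨v, hs v hv⟩ else u
  have hg_out : ∀ v (hv : v ∉ K), g v = ⟨v, hs v hv⟩ := fun v hv => dif_pos hv
  have hg_in : ∀ v ∈ K, g v = u := fun v hv => dif_neg (not_not.2 hv)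
  refine ⟨coverComap g C, hC.coverComap g,
    (cevsCost_coverComap_le g G _ K (fun x hx y hy hxy => ?_) (fun v hv => ?_)
      (fun x hx y => ?_) (fun x hx y hy => ?_)).trans hcost⟩
  · rw [hg_out x hx, hg_out y hy] at hxy
    exact congrArg Subtype.val hxy
  · rw [hg_in v hv, hu1]
  · rw [clusterGraphOf_coverComap_adj, hg_in x hx]
    by_cases hy : y ∈ K
    · obtain ⟨S, hS, huS⟩ := hC u
      rw [hg_in y hy]
      exact ⟨fun h => ⟨h.ne, S, hS, huS, huS⟩, fun h => adj_of_closedNbhd_eq (htwin x hx y hy) h.1⟩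
    · have hy' : (⟨y, hs y hy⟩ : s) ∉ K.subtype (· ∈ s) := by simpa [mem_subtype] using hy
      rw [hg_out y hy, adj_iff_adj_of_closedNbhd_eq (htwin x hx u huK)
        (ne_of_mem_of_not_mem hx hy).symm (ne_of_mem_of_not_mem huK hy).symm]
      have hne : u ≠ ⟨y, hs y hy⟩ := by rintro rfl; exact hy huK
      exact (hu _ hy').trans <| clusterGraphOf_adj.trans <|
        and_congr_left' (iff_of_true hne (ne_of_mem_of_not_mem hx hy))
  · rw [hg_out x hx, hg_out y hy]
    rfl

/-- Truncating a critical clique with more than `k + 1` vertices to exactly `k + 1`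
vertices preserves the answer to CEVS: if `K` is a critical clique of `G` with
`|K| > k + 1` and `G'` is obtained from `G` by deleting a set `D` of `|K| - (k + 1)`
vertices of `K`, then `(G, k)` is a yes-instance iff `(G', k)` is. -/
theorem truncate_critical_clique {V : Type*} [Fintype V] (G : SimpleGraph V) (k : ℕ)
    (K : Finset V) (hK : IsCriticalClique G (K : Set V)) (hbig : k + 1 < K.card)
    (D : Finset V) (hD : D ⊆ K) (hcard : D.card = K.card - (k + 1)) :
    CEVS G k ↔ CEVS (G.induce ((D : Set V)ᶜ)) k := by
  refine ⟨CEVS.comap (Function.Embedding.subtype _),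
    CEVS.of_induce_of_closedNbhd_eq (K := K) ?_ ?_ ?_⟩
  · obtain ⟨U, hU⟩ := hK.2.1
    exact fun x hx y hy => (hU x hx).trans (hU y hy).symm
  · exact fun v hv hvD => hv (hD hvD)
  · calc k + 1 = #(K \ D) := by rw [card_sdiff_of_subset hD]; omega
      _ ≤ _ := card_le_card fun v hv => by simpa using hv
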